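/- Let q_1,...,q_M be Gaussian densities on ℝ^d with means μ_m and diagonal covariances. If KL(q_m || (1/M)∑_{m̃} q_{m̃}) = 0 for all m, then all (μ_m, σ_m) are equal; i.e., in the Gaussian case, vanishing of the MMVM rate term implies all unimodal encoders produce identical distribution parameters. -/

import Mathlib

open MeasureTheory ProbabilityTheory InformationTheory Real

open scoped NNReal

/-!
The integrand `q log (q / r) - (q - r) = r · klFun (q / r)` is continuous and nonnegative, and
its integral is `KL(q ‖ r) - (1 - 1) = 0`, so it vanishes everywhere and each `q_m` equals the
mixture `r`; integrability comes from the bound `q_m ≤ M r`. Restricting two equal diagonal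
Gaussian densities to a coordinate axis leaves two proportional one-dimensional Gaussians, whose
logarithms are quadratics in `t`; comparing coefficients gives the mean and the variance.
-/

section GibbsEquality

variable {X : Type*} [MeasurableSpace X] {ν : Measure X} {p r : X → ℝ}

lemma mul_log_div_sub_sub_eq_mul_klFun {a b : ℝ} (hb : b ≠ 0) :
    a * log (a / b) - (a - b) = b * klFun (a / b) := by
  rw [klFun_apply]
  field_simp
  ring

lemma eq_of_integral_mul_log_div_eq_zero [TopologicalSpace X] [ν.IsOpenPosMeasure]
    (hp : Continuous p) (hr : Continuous r) (hp0 : ∀ x, 0 ≤ p x) (hr0 : ∀ x, 0 < r x)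
    (hpi : Integrable p ν) (hri : Integrable r ν) (hpr : ∫ x, p x ∂ν = ∫ x, r x ∂ν)
    (hi : Integrable (fun x => p x * log (p x / r x)) ν)
    (h : ∫ x, p x * log (p x / r x) ∂ν = 0) : p = r := by
  set f := fun x => r x * klFun (p x / r x)
  have hf : (fun x => p x * log (p x / r x) - (p x - r x)) = f := funext fun x =>
    mul_log_div_sub_sub_eq_mul_klFun (hr0 x).ne'
  have hpri : Integrable (fun x => p x - r x) ν := hpi.sub hri
  have hf0 : ∀ x, 0 ≤ f x := fun x =>
    mul_nonneg (hr0 x).le (klFun_nonneg (div_nonneg (hp0 x) (hr0 x).le))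
  have hfc : Continuous f :=
    hr.mul (continuous_klFun.comp (hp.div hr fun x => (hr0 x).ne'))
  have hfi : Integrable f ν := by
    rw [← hf]
    exact hi.sub hpri
  have hf_int : ∫ x, f x ∂ν = 0 := by
    rw [← hf, integral_sub hi hpri, integral_sub hpi hri, h, hpr]
    ring
  have hf_eq : f = 0 :=
    (hfc.ae_eq_iff_eq ν continuous_const).1
      ((integral_eq_zero_iff_of_nonneg hf0 hfi).1 hf_int)
  funext x
  have hx : klFun (p x / r x) = 0 :=
    (mul_eq_zero.1 (congrFun hf_eq x)).resolve_left (hr0 x).ne'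
  rw [klFun_eq_zero_iff (div_nonneg (hp0 x) (hr0 x).le), div_eq_one_iff_eq (hr0 x).ne'] at hx
  exact hx

lemma integrable_mul_log_div_of_le_const_mul {c : ℝ} (hp : Measurable p) (hr : Measurable r)
    (hp0 : ∀ x, 0 ≤ p x) (hr0 : ∀ x, 0 < r x) (hpi : Integrable p ν) (hri : Integrable r ν)
    (hpc : ∀ x, p x ≤ c * r x) : Integrable (fun x => p x * log (p x / r x)) ν := by
  refine Integrable.mono' ((hpi.const_mul |log c|).add hri)
    (hp.mul (hp.div hr).log).aestronglyMeasurable (ae_of_all _ fun x => ?_)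
  have lower : p x - r x ≤ p x * log (p x / r x) := by
    have := mul_log_div_sub_sub_eq_mul_klFun (a := p x) (hr0 x).ne'
    nlinarith [mul_nonneg (hr0 x).le (klFun_nonneg (div_nonneg (hp0 x) (hr0 x).le))]
  have upper : p x * log (p x / r x) ≤ p x * |log c| := by
    rcases (hp0 x).eq_or_lt with hx | hx
    · simp [← hx]
    refine mul_le_mul_of_nonneg_left ((log_le_log (div_pos hx (hr0 x)) ?_).trans (le_abs_self _))
      hx.le
    exact (div_le_iff₀ (hr0 x)).2 (hpc x)
  rw [Real.norm_eq_abs, abs_le, Pi.add_apply]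
  constructor <;> nlinarith [hp0 x, hr0 x, mul_nonneg (abs_nonneg (log c)) (hp0 x)]

end GibbsEquality

lemma eq_mixture_of_integral_mul_log_div_mixture_eq_zero {X ι : Type*} [TopologicalSpace X]
    [MeasurableSpace X] [OpensMeasurableSpace X] {ν : Measure X} [ν.IsOpenPosMeasure]
    [Fintype ι] (p : ι → X → ℝ) (r : X → ℝ)
    (hr : ∀ x, r x = (1 / Fintype.card ι) * ∑ k, p k x) (hp : ∀ k, Continuous (p k))
    (hp0 : ∀ k x, 0 < p k x) (hpi : ∀ k, Integrable (p k) ν) (hp1 : ∀ k, ∫ x, p k x ∂ν = 1)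
    (n : ι) (h : ∫ x, p n x * log (p n x / r x) ∂ν = 0) : p n = r := by
  obtain rfl : r = fun x => (1 / Fintype.card ι) * ∑ k, p k x := funext hr
  have hcard : (0 : ℝ) < Fintype.card ι := by exact_mod_cast Fintype.card_pos_iff.2 ⟨n⟩
  have hr0 : ∀ x, 0 < (1 / Fintype.card ι) * ∑ k, p k x := fun x =>
    mul_pos (by positivity) (Finset.sum_pos (fun k _ => hp0 k x) ⟨n, Finset.mem_univ n⟩)
  have hrc : Continuous fun x => (1 / Fintype.card ι) * ∑ k, p k x :=
    continuous_const.mul (continuous_finsetSum _ fun k _ => hp k)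
  have hri : Integrable (fun x => (1 / Fintype.card ι) * ∑ k, p k x) ν :=
    (integrable_finsetSum _ fun k _ => hpi k).const_mul _
  have hr1 : ∫ x, (1 / Fintype.card ι) * ∑ k, p k x ∂ν = 1 := by
    rw [integral_const_mul, integral_finsetSum _ fun k _ => hpi k]
    simp only [hp1, Finset.sum_const, Finset.card_univ, nsmul_eq_mul, mul_one]
    field_simp
  have hpc : ∀ x, p n x ≤ Fintype.card ι * ((1 / Fintype.card ι) * ∑ k, p k x) := fun x => by
    rw [← mul_assoc, mul_one_div_cancel hcard.ne', one_mul]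
    exact Finset.single_le_sum (fun k _ => (hp0 k x).le) (Finset.mem_univ n)
  exact eq_of_integral_mul_log_div_eq_zero (hp n) hrc (fun x => (hp0 n x).le) hr0 (hpi n) hri
    (by rw [hp1, hr1]) (integrable_mul_log_div_of_le_const_mul (hp n).measurable hrc.measurable
      (fun x => (hp0 n x).le) hr0 (hpi n) hri hpc) h

lemma one_div_mul_exp_eq_gaussianPDFReal {σ : ℝ} (hσ : 0 < σ) (μ t : ℝ) :
    1 / (σ * √(2 * π)) * exp (-(t - μ) ^ 2 / (2 * σ ^ 2))
      = gaussianPDFReal μ (σ ^ 2).toNNReal t := by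
  rw [gaussianPDFReal_def, Real.coe_toNNReal _ (sq_nonneg σ), mul_comm (2 * π),
    sqrt_mul (sq_nonneg σ), sqrt_sq hσ.le, one_div]

lemma continuous_gaussianPDFReal (μ : ℝ) (v : ℝ≥0) : Continuous (gaussianPDFReal μ v) := by
  rw [gaussianPDFReal_def]
  fun_prop

lemma log_mul_gaussianPDFReal {a : ℝ} (ha : 0 < a) (μ : ℝ) {v : ℝ≥0} (hv : v ≠ 0) (t : ℝ) :
    log (gaussianPDFReal μ v t * a) = log (a / √(2 * π * v)) - (t - μ) ^ 2 / (2 * v) := by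
  have hs : 0 < √(2 * π * v) := sqrt_pos.2 (by positivity)
  rw [gaussianPDFReal, mul_comm, ← mul_assoc, ← div_eq_mul_inv,
    log_mul (div_pos ha hs).ne' (exp_pos _).ne', log_exp]
  ring

lemma eq_of_forall_sub_sq_div_eq {a b μ μ' v v' : ℝ} (hv : v ≠ 0)
    (h : ∀ t, a - (t - μ) ^ 2 / v = b - (t - μ') ^ 2 / v') : μ = μ' ∧ v = v' := by
  have h₀ := h 0
  have h₁ := h 1
  have h₂ := h (-1)
  -- the second and first differences at `0` read off the coefficients of `t ^ 2` and `t`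
  obtain rfl : v = v' := inv_injective (by linear_combination (h₁ + h₂ - 2 * h₀) / (-2))
  exact ⟨mul_right_cancel₀ (inv_ne_zero hv) (by linear_combination (h₂ - h₁) / (-4)), rfl⟩

lemma gaussianPDFReal_params_eq_of_mul_eq {a b μ μ' : ℝ} {v v' : ℝ≥0} (ha : 0 < a) (hb : 0 < b)
    (hv : v ≠ 0) (hv' : v' ≠ 0) (h : ∀ t, gaussianPDFReal μ v t * a = gaussianPDFReal μ' v' t * b) :
    μ = μ' ∧ v = v' := by
  have hlog : ∀ t, log (a / √(2 * π * v)) - (t - μ) ^ 2 / (2 * v)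
      = log (b / √(2 * π * v')) - (t - μ') ^ 2 / (2 * v') := fun t => by
    rw [← log_mul_gaussianPDFReal ha μ hv, ← log_mul_gaussianPDFReal hb μ' hv', h]
  obtain ⟨hμ, hv2⟩ := eq_of_forall_sub_sq_div_eq (by positivity) hlog
  exact ⟨hμ, NNReal.coe_injective (by linarith)⟩

lemma prod_apply_update_eq_mul_prod_erase {ι : Type*} [Fintype ι] [DecidableEq ι]
    (f : ι → ℝ → ℝ) (x : ι → ℝ) (i : ι) (t : ℝ) :
    ∏ j, f j (Function.update x i t j) = f i t * ∏ j ∈ Finset.univ.erase i, f j (x j) := by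
  simp_rw [Function.apply_update f, Finset.prod_update_of_mem (Finset.mem_univ i),
    Finset.sdiff_singleton_eq_erase]

section DiagonalGaussian

variable {ι : Type*} [Fintype ι]

noncomputable def diagGaussianPDF (μ : ι → ℝ) (v : ι → ℝ≥0) (x : ι → ℝ) : ℝ :=
  ∏ i, gaussianPDFReal (μ i) (v i) (x i)

variable {μ μ' : ι → ℝ} {v v' : ι → ℝ≥0}

lemma diagGaussianPDF_pos (hv : ∀ i, v i ≠ 0) (x : ι → ℝ) : 0 < diagGaussianPDF μ v x :=
  Finset.prod_pos fun i _ => gaussianPDFReal_pos _ _ _ (hv i)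

lemma continuous_diagGaussianPDF : Continuous (diagGaussianPDF μ v) :=
  continuous_finsetProd _ fun i _ => (continuous_gaussianPDFReal _ _).comp (continuous_apply i)

lemma integrable_diagGaussianPDF :
    Integrable (diagGaussianPDF μ v) (Measure.pi fun _ => volume) :=
  Integrable.fintype_prod (f := fun i => gaussianPDFReal (μ i) (v i)) fun _ =>
    integrable_gaussianPDFReal _ _

lemma integral_diagGaussianPDF (hv : ∀ i, v i ≠ 0) :
    ∫ x, diagGaussianPDF μ v x ∂(Measure.pi fun _ => volume) = 1 := by
  simp only [diagGaussianPDF]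
  rw [integral_fintype_prod_eq_prod (fun i => gaussianPDFReal (μ i) (v i))]
  exact Finset.prod_eq_one fun i _ => integral_gaussianPDFReal_eq_one _ (hv i)

lemma diagGaussianPDF_params_eq (hv : ∀ i, v i ≠ 0) (hv' : ∀ i, v' i ≠ 0)
    (h : diagGaussianPDF μ v = diagGaussianPDF μ' v') : μ = μ' ∧ v = v' := by
  classical
  have slice : ∀ i, μ i = μ' i ∧ v i = v' i := fun i =>
    gaussianPDFReal_params_eq_of_mul_eq
      (Finset.prod_pos fun j _ => gaussianPDFReal_pos _ _ _ (hv j))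
      (Finset.prod_pos fun j _ => gaussianPDFReal_pos _ _ _ (hv' j)) (hv i) (hv' i) fun t => by
        simpa only [diagGaussianPDF, prod_apply_update_eq_mul_prod_erase]
          using congrFun h (Function.update 0 i t)
  exact ⟨funext fun i => (slice i).1, funext fun i => (slice i).2⟩

end DiagonalGaussian

/-- Gaussian case: if `q₁,…,q_M` are diagonal Gaussian densities on `ℝ^d` and every
`KL(qₘ ‖ (1/M)∑ₘ̃ qₘ̃)` vanishes, then all means and standard deviations coincide. -/
theorem gaussian_kl_mixture_zero_implies_equal_params
    (d M : ℕ) (μv σv : Fin M → Fin d → ℝ)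
    (hσ : ∀ m i, 0 < σv m i)
    (q : Fin M → (Fin d → ℝ) → ℝ)
    (hq : ∀ m x, q m x = ∏ i, (1 / (σv m i * Real.sqrt (2 * Real.pi)))
        * Real.exp (-(x i - μv m i) ^ 2 / (2 * (σv m i) ^ 2)))
    (r : (Fin d → ℝ) → ℝ)
    (hr : ∀ x, r x = (1 / (M : ℝ)) * ∑ m, q m x)
    (hKL : ∀ m, ∫ x, q m x * Real.log (q m x / r x)
        ∂(Measure.pi fun _ : Fin d => (volume : Measure ℝ)) = 0) :
    ∀ m m', μv m = μv m' ∧ σv m = σv m' := by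
  intro m m'
  set v : Fin M → Fin d → ℝ≥0 := fun n i => (σv n i ^ 2).toNNReal
  have hv : ∀ n i, v n i ≠ 0 := fun n i => by
    simpa [v] using (hσ n i).ne'
  have hqv : ∀ n, q n = diagGaussianPDF (μv n) (v n) := fun n => funext fun x => by
    simp only [hq, diagGaussianPDF, one_div_mul_exp_eq_gaussianPDFReal (hσ n _), v]
  have hqr : ∀ n, q n = r := fun n => eq_mixture_of_integral_mul_log_div_mixture_eq_zero q r
    (by simpa only [Fintype.card_fin] using hr) (fun k => hqv k ▸ continuous_diagGaussianPDF)
    (fun k => hqv k ▸ diagGaussianPDF_pos (hv k)) (fun k => hqv k ▸ integrable_diagGaussianPDF)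
    (fun k => hqv k ▸ integral_diagGaussianPDF (hv k)) n (hKL n)
  obtain ⟨hμ, hvv⟩ := diagGaussianPDF_params_eq (hv m) (hv m')
    (by rw [← hqv, ← hqv, hqr, hqr])
  refine ⟨hμ, funext fun i => ?_⟩
  have hσ2 : σv m i ^ 2 = σv m' i ^ 2 := by
    simpa [v, Real.toNNReal_eq_toNNReal_iff, sq_nonneg] using congrFun hvv i
  exact (pow_left_inj₀ (hσ m i).le (hσ m' i).le two_ne_zero).1 hσ2
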